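/- Fix an even integer l ≥ 2, let ζ = e^{2πi/l}, ω = e^{πi/l}, let P ∈ M_l(ℂ) be the cyclic permutation matrix (P_{i,i+1} = 1 for 1 ≤ i ≤ l−1, P_{l,1} = 1, other entries 0) and Q = diag(ζ, ζ², …, ζ^l), and for r, m ∈ ℤ set a_{r,m} = ω^{rm}·Q^r·P^m and c_{r,m} = a_{r,m} − (−1)^m·ζ^r·a_{−r,m}. Let T₁ ∈ M_l(ℂ) be the matrix with (T₁)_{i, l+1−i} = (−1)^i for 1 ≤ i ≤ l and all other entries 0. Then span_ℂ{ c_{r,m} : r, m ∈ ℤ } = { X ∈ M_l(ℂ) : Xᵀ·T₁ = −T₁·X }; this set is a Lie subalgebra of gl_l(ℂ) of dimension l(l+1)/2, and it is isomorphic as a complex Lie algebra to the symplectic Lie algebra sp(l,ℂ). -/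

import Mathlib

open Complex Matrix

/-- The `l×l` complex matrix algebra, with rows and columns indexed cyclically. -/
abbrev MatL (l : ℕ) := Matrix (ZMod l) (ZMod l) ℂ

/-- `ζ = e^{2πi/l}`. -/
noncomputable def zetaL (l : ℕ) : ℂ := Complex.exp (2 * Real.pi * Complex.I / l)

/-- The cyclic permutation matrix `P` (with `P_{i,i+1} = 1` cyclically). -/
noncomputable def Pmat (l : ℕ) : MatL l :=
  Matrix.of fun i j => if j = i + 1 then (1 : ℂ) else 0

/-- The diagonal matrix `Q = diag(ζ, ζ², …, ζ^l)`. -/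
noncomputable def Qmat (l : ℕ) : MatL l :=
  Matrix.of fun i j => if i = j then zetaL l ^ (i.val + 1) else 0

/-- `ω = e^{πi/l}`. -/
noncomputable def omegaL (l : ℕ) : ℂ := Complex.exp (Real.pi * Complex.I / l)

/-- The matrices `a_{r,m} = ω^{rm} · Q^r · P^m` for `r, m ∈ ℤ`. -/
noncomputable def amat (l : ℕ) [NeZero l] (r m : ℤ) : MatL l :=
  omegaL l ^ (r * m) • (Qmat l ^ r * Pmat l ^ m)


/-- `c_{r,m} = a_{r,m} − (−1)^m ζ^r a_{−r,m}`. -/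
noncomputable def cmat (l : ℕ) [NeZero l] (r m : ℤ) : MatL l :=
  amat l r m - ((-1 : ℂ) ^ m * zetaL l ^ r) • amat l (-r) m

/-- For a fixed matrix `T`, the linear map `X ↦ Xᵀ·T + T·X`, whose kernel is the space of
matrices with `Xᵀ·T = −T·X`. -/
noncomputable def skewPair {n : Type*} [Fintype n] (T : Matrix n n ℂ) :
    Matrix n n ℂ →ₗ[ℂ] Matrix n n ℂ where
  toFun X := Xᵀ * T + T * X
  map_add' X Y := by
    simp only [Matrix.transpose_add, Matrix.add_mul, Matrix.mul_add]
    abel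
  map_smul' c X := by
    simp [Matrix.transpose_smul, Matrix.smul_mul, Matrix.mul_smul]

/-- The matrix `T₁` with `(T₁)_{i, l+1−i} = (−1)^i` (1-indexed) on the antidiagonal. -/
noncomputable def T1mat (l : ℕ) : MatL l :=
  Matrix.of fun i j => if i.val + j.val + 1 = l then (-1 : ℂ) ^ (i.val + 1) else 0

/-- The standard symplectic form `J` on `ℂ^l` (block form `[[0, 1], [−1, 0]]`). -/
noncomputable def Jmat (l : ℕ) : MatL l :=
  Matrix.of fun i j =>
    if i.val + l / 2 = j.val then (1 : ℂ) else if j.val + l / 2 = i.val then -1 else 0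

/-!
Put `θ X = T₁ Xᵀ T₁`. For even `l` we have `T₁ᵀ = -T₁` and `T₁² = -1`, so `θ` is an involution
and `θ X - X = T₁ (Xᵀ T₁ + T₁ X)`: the space `{X : Xᵀ T₁ = -T₁ X}` is the fixed space of `θ`,
i.e. the image of `1 + θ`. Reading off matrix entries, `θ a_{r,m} = -(-1)^m ζ^r a_{-r,m}`, so
`c_{r,m} = (1 + θ) a_{r,m}`. The `a_{r,m}` span `M_l(ℂ)`: averaging `Q^r` over `r` against a
character of `ℤ/l` isolates a diagonal matrix unit, and `P^m` moves it off the diagonal. Hence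
the `c_{r,m}` span the fixed space.
Because `T₁` is skew-symmetric and invertible, `X ↦ T₁ X` maps this space onto the symmetric
matrices, which gives the dimension, and a signed permutation matrix `S` with `Sᵀ T₁ S = J`
conjugates it onto `sp(l, ℂ)`.
-/

namespace Matrix

variable {n : Type*} [Fintype n] [DecidableEq n]

lemma diagonal_zpow {K : Type*} [Field K] (v : n → K) (hv : ∀ i, v i ≠ 0) (r : ℤ) :
    diagonal v ^ r = diagonal (v ^ r) := by
  cases r with
  | ofNat k => simp [diagonal_pow]
  | negSucc k =>
    rw [zpow_negSucc, diagonal_pow]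
    refine inv_eq_left_inv ?_
    rw [diagonal_mul_diagonal, ← diagonal_one]
    congr 1
    funext i
    simp [hv]

lemma permMatrix_zpow {R : Type*} [CommRing R] (σ : Equiv.Perm n) (m : ℤ) :
    σ.permMatrix R ^ m = (σ ^ m).permMatrix R := by
  have h : ∀ τ : Equiv.Perm n, τ.permMatrix R = (permMatrixHom (R := R)).toHomUnits τ⁻¹ := by
    intro τ
    rw [MonoidHom.coe_toHomUnits, permMatrixHom_apply, inv_inv]
  rw [h, h, ← coe_units_zpow, ← map_zpow, _root_.inv_zpow]

lemma transpose_permMatrix_mul_diagonal_mul {R : Type*} [CommRing R] (σ : Equiv.Perm n)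
    (d : n → R) (A : Matrix n n R) :
    (σ.permMatrix R * diagonal d)ᵀ * A * (σ.permMatrix R * diagonal d) =
      of fun a b => d a * A (σ.symm a) (σ.symm b) * d b := by
  rw [transpose_mul, transpose_permMatrix, diagonal_transpose, Matrix.mul_assoc, Matrix.mul_assoc,
    PEquiv.toMatrix_toPEquiv_mul, ← Matrix.mul_assoc, PEquiv.mul_toMatrix_toPEquiv]
  ext a b
  simp [diagonal_mul, mul_diagonal, mul_assoc]

end Matrix

theorem span_image_one_add_eq_ker_sub_one {K M : Type*} [Field K] [NeZero (2 : K)]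
    [AddCommGroup M] [Module K M] {θ : Module.End K M} (hθ : θ * θ = 1) {s : Set M}
    (hs : Submodule.span K s = ⊤) :
    Submodule.span K (⇑(1 + θ) '' s) = LinearMap.ker (θ - 1) := by
  rw [← Submodule.map_span, hs, Submodule.map_top]
  ext x
  constructor
  · rintro ⟨y, rfl⟩
    have hθy : θ (θ y) = y := LinearMap.congr_fun hθ y
    simp only [LinearMap.mem_ker, LinearMap.sub_apply, LinearMap.add_apply, map_add, hθy,
      Module.End.one_apply]
    abel
  · intro hx
    have hx : θ x = x := sub_eq_zero.mp hx
    refine ⟨(2 : K)⁻¹ • x, ?_⟩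
    rw [LinearMap.add_apply, Module.End.one_apply, map_smul, hx, ← two_smul K, smul_smul,
      mul_inv_cancel₀ two_ne_zero, one_smul]

section SkewPair

variable {n : Type*}

def sym2ToMatrix (K : Type*) [Semiring K] : (Sym2 n → K) →ₗ[K] Matrix n n K where
  toFun f := of fun i j => f s(i, j)
  map_add' _ _ := rfl
  map_smul' _ _ := rfl

@[simp]
lemma sym2ToMatrix_apply {K : Type*} [Semiring K] (f : Sym2 n → K) (i j : n) :
    sym2ToMatrix K f i j = f s(i, j) := rfl

lemma sym2ToMatrix_transpose {K : Type*} [Semiring K] (f : Sym2 n → K) :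
    (sym2ToMatrix K f)ᵀ = sym2ToMatrix K f := by
  ext i j
  simp [Sym2.eq_swap]

lemma sym2ToMatrix_injective (K : Type*) [Semiring K] :
    Function.Injective (sym2ToMatrix (n := n) K) := by
  intro f g hfg
  funext s
  induction s using Sym2.ind with
  | _ i j => exact congrFun (congrFun hfg i) j

variable [Fintype n]

lemma skewPair_apply (T X : Matrix n n ℂ) : skewPair T X = Xᵀ * T + T * X := rfl

lemma mem_ker_skewPair_iff {T : Matrix n n ℂ} (hT : Tᵀ = -T) (X : Matrix n n ℂ) :
    X ∈ LinearMap.ker (skewPair T) ↔ (T * X)ᵀ = T * X := by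
  rw [LinearMap.mem_ker, skewPair_apply, transpose_mul, hT, Matrix.mul_neg, neg_eq_iff_eq_neg,
    add_eq_zero_iff_eq_neg]

variable [DecidableEq n]

lemma ker_skewPair (T : Matrix n n ℂ) :
    LinearMap.ker (skewPair T) = skewAdjointMatricesSubmodule T := by
  ext X
  simp [skewPair_apply, Matrix.IsSkewAdjoint, Matrix.IsAdjointPair, add_eq_zero_iff_eq_neg]

lemma commutator_mem_ker_skewPair {T X Y : Matrix n n ℂ} (hX : X ∈ LinearMap.ker (skewPair T))
    (hY : Y ∈ LinearMap.ker (skewPair T)) : X * Y - Y * X ∈ LinearMap.ker (skewPair T) := by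
  rw [ker_skewPair] at *
  simpa only [Ring.lie_def] using T.isSkewAdjoint_bracket hX hY

theorem exists_ker_skewPair_linearEquiv_map_commutator (T S : Matrix n n ℂ) [Invertible S] :
    ∃ e : LinearMap.ker (skewPair T) ≃ₗ[ℂ] LinearMap.ker (skewPair (Sᵀ * T * S)),
      ∀ X Y : LinearMap.ker (skewPair T), ∃ Z : LinearMap.ker (skewPair T),
        (Z : Matrix n n ℂ) = X * Y - Y * X ∧
          (e Z : Matrix n n ℂ) = e X * e Y - e Y * e X := by
  let f := skewAdjointMatricesLieSubalgebraEquiv T S ‹_›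
  refine ⟨(LinearEquiv.ofEq _ _ (ker_skewPair T)).trans
    (f.toLinearEquiv.trans (LinearEquiv.ofEq _ _ (ker_skewPair _).symm)), fun X Y => ?_⟩
  refine ⟨⟨X * Y - Y * X, commutator_mem_ker_skewPair X.2 Y.2⟩, rfl, ?_⟩
  exact congrArg Subtype.val
    (f.map_lie ⟨X, by simpa [ker_skewPair] using X.2⟩ ⟨Y, by simpa [ker_skewPair] using Y.2⟩)

lemma ker_skewPair_eq_range {T : Matrix n n ℂ} (hT : Tᵀ = -T) [Invertible T] :
    LinearMap.ker (skewPair T) =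
      LinearMap.range (LinearMap.mulLeft ℂ (⅟T) ∘ₗ sym2ToMatrix ℂ) := by
  ext X
  rw [mem_ker_skewPair_iff hT, LinearMap.mem_range]
  constructor
  · intro hX
    have hsymm : ∀ i j, (T * X) i j = (T * X) j i := fun i j => congrFun (congrFun hX j) i
    refine ⟨Sym2.lift ⟨fun i j => (T * X) i j, hsymm⟩, ?_⟩
    have hTX : sym2ToMatrix ℂ (Sym2.lift ⟨fun i j => (T * X) i j, hsymm⟩) = T * X := by
      ext i j
      simp
    rw [LinearMap.comp_apply, hTX, LinearMap.mulLeft_apply, invOf_mul_cancel_left]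
  · rintro ⟨f, rfl⟩
    rw [LinearMap.comp_apply, LinearMap.mulLeft_apply, mul_invOf_cancel_left,
      sym2ToMatrix_transpose]

theorem finrank_ker_skewPair {T : Matrix n n ℂ} (hT : Tᵀ = -T) [Invertible T] :
    Module.finrank ℂ (LinearMap.ker (skewPair T)) =
      Fintype.card n * (Fintype.card n + 1) / 2 := by
  rw [ker_skewPair_eq_range hT, LinearMap.finrank_range_of_inj,
    Module.finrank_fintype_fun_eq_card, Sym2.card, Nat.choose_two_right, Nat.add_sub_cancel,
    Nat.mul_comm]
  exact (isUnit_of_invertible (⅟T)).mul_right_injective.comp (sym2ToMatrix_injective ℂ)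

end SkewPair

section TransposeConj

variable {n R : Type*} [Fintype n] [CommRing R]

def transposeConj (T : Matrix n n R) : Module.End R (Matrix n n R) where
  toFun X := T * Xᵀ * T
  map_add' X Y := by simp [Matrix.mul_add, Matrix.add_mul]
  map_smul' c X := by simp

lemma transposeConj_apply (T X : Matrix n n R) : transposeConj T X = T * Xᵀ * T := rfl

variable [DecidableEq n]

lemma transposeConj_mul_self {T : Matrix n n R} (hT : Tᵀ = -T) (hT2 : T * T = -1) :
    transposeConj T * transposeConj T = 1 := by
  ext1 X
  simp only [Module.End.mul_apply, transposeConj_apply, transpose_mul, transpose_transpose, hT,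
    Module.End.one_apply, Matrix.mul_assoc, Matrix.neg_mul, Matrix.mul_neg, neg_neg]
  rw [← Matrix.mul_assoc T T, hT2]
  simp

lemma ker_skewPair_eq_ker_transposeConj_sub_one {T : Matrix n n ℂ} (hT2 : T * T = -1) :
    LinearMap.ker (skewPair T) = LinearMap.ker (transposeConj T - 1) := by
  have h : transposeConj T - 1 = LinearMap.mulLeft ℂ T ∘ₗ skewPair T := by
    ext1 X
    rw [LinearMap.sub_apply, LinearMap.comp_apply, LinearMap.mulLeft_apply, transposeConj_apply,
      Module.End.one_apply, skewPair_apply, Matrix.mul_add, ← Matrix.mul_assoc,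
      ← Matrix.mul_assoc, hT2, Matrix.neg_mul, Matrix.one_mul, sub_eq_add_neg]
  have hinj : Function.Injective (LinearMap.mulLeft ℂ T) := fun X Y hXY => by
    simpa [← Matrix.mul_assoc, hT2] using congrArg (T * ·) hXY
  rw [h, LinearMap.ker_comp_of_ker_eq_bot _ (LinearMap.ker_eq_bot.mpr hinj)]

end TransposeConj

section Weyl

variable (l : ℕ)

lemma omegaL_ne_zero : omegaL l ≠ 0 := Complex.exp_ne_zero _

lemma zetaL_eq_omegaL_sq : zetaL l = omegaL l ^ 2 := by
  rw [omegaL, zetaL, ← Complex.exp_nat_mul]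
  ring_nf

lemma Qmat_eq_diagonal : Qmat l = diagonal fun i => zetaL l ^ (i.val + 1) := rfl

variable [NeZero l]

lemma omegaL_isPrimitiveRoot : IsPrimitiveRoot (omegaL l) (2 * l) := by
  rw [omegaL]
  convert Complex.isPrimitiveRoot_exp (2 * l) (by simp [NeZero.ne l]) using 2
  push_cast
  field_simp

lemma zetaL_isPrimitiveRoot : IsPrimitiveRoot (zetaL l) l := by
  rw [zetaL_eq_omegaL_sq]
  exact (omegaL_isPrimitiveRoot l).pow (by simp [Nat.pos_of_neZero]) rfl

lemma omegaL_zpow_eq_of_dvd {a b : ℤ} (h : (2 * l : ℤ) ∣ a - b) :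
    omegaL l ^ a = omegaL l ^ b := by
  rw [← sub_add_cancel a b, zpow_add₀ (omegaL_ne_zero l),
    ((omegaL_isPrimitiveRoot l).zpow_eq_one_iff_dvd _).mpr (by exact_mod_cast h), one_mul]

lemma neg_one_eq_omegaL_zpow : (-1 : ℂ) = omegaL l ^ (l : ℤ) := by
  rw [zpow_natCast, omegaL, ← Complex.exp_nat_mul,
    mul_div_cancel₀ _ (Nat.cast_ne_zero.mpr (NeZero.ne l)), Complex.exp_pi_mul_I]

lemma Pmat_zpow_apply (m : ℤ) (i j : ZMod l) :
    (Pmat l ^ m) i j = if j = i + m then 1 else 0 := by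
  have hP : Pmat l = (Equiv.addRight (1 : ZMod l)).permMatrix ℂ := by
    ext i j
    simp [Pmat, PEquiv.toMatrix_apply, eq_comm]
  simp [hP, permMatrix_zpow, PEquiv.toMatrix_apply, eq_comm]

lemma Qmat_zpow (r : ℤ) : Qmat l ^ r = diagonal fun i => (zetaL l ^ (i.val + 1)) ^ r :=
  diagonal_zpow _ (fun _ => pow_ne_zero _ (Complex.exp_ne_zero _)) r

lemma amat_apply (r m : ℤ) (i j : ZMod l) :
    amat l r m i j = if j = i + m then omegaL l ^ (r * (m + 2 * (i.val + 1))) else 0 := by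
  rw [amat, Matrix.smul_apply, Qmat_zpow, diagonal_mul, Pmat_zpow_apply, zetaL_eq_omegaL_sq]
  split_ifs
  · rw [smul_eq_mul, mul_one, ← pow_mul, ← zpow_natCast, ← _root_.zpow_mul,
      ← zpow_add₀ (omegaL_ne_zero l)]
    congr 1
    push_cast
    ring
  · simp

lemma sum_range_zetaL_pow (i p : ZMod l) :
    ∑ r ∈ Finset.range l, ((zetaL l ^ (p.val + 1))⁻¹ * zetaL l ^ (i.val + 1)) ^ r =
      if i = p then (l : ℂ) else 0 := by
  have hζ := zetaL_isPrimitiveRoot l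
  have hx : (zetaL l ^ (p.val + 1))⁻¹ * zetaL l ^ (i.val + 1) =
      zetaL l ^ ((i.val : ℤ) - p.val) := by
    rw [zpow_sub₀ (hζ.ne_zero (NeZero.ne l)), zpow_natCast, zpow_natCast, pow_succ, pow_succ]
    field_simp [hζ.ne_zero (NeZero.ne l)]
  rw [hx]
  split_ifs with hip
  · simp [hip]
  · have hne : zetaL l ^ ((i.val : ℤ) - p.val) ≠ 1 := by
      rw [Ne, hζ.zpow_eq_one_iff_dvd, ← ZMod.intCast_zmod_eq_zero_iff_dvd]
      simpa [sub_eq_zero] using hip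
    rw [geom_sum_eq hne, ← zpow_natCast, ← _root_.zpow_mul, mul_comm, _root_.zpow_mul,
      zpow_natCast, hζ.pow_eq_one, _root_.one_zpow, sub_self, zero_div]

lemma sum_range_smul_Qmat_pow (p : ZMod l) :
    ∑ r ∈ Finset.range l, ((zetaL l ^ (p.val + 1))⁻¹) ^ r • Qmat l ^ r =
      (l : ℂ) • single p p 1 := by
  ext i j
  rw [Matrix.sum_apply]
  simp only [Qmat_eq_diagonal, diagonal_pow, Matrix.smul_apply, diagonal_apply, single_apply,
    Pi.pow_apply, smul_eq_mul]
  by_cases hij : i = j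
  · subst hij
    simp only [if_true, ← mul_pow, sum_range_zetaL_pow]
    by_cases hip : i = p
    · simp [hip]
    · simp [hip, Ne.symm hip]
  · simp only [if_neg hij, mul_zero, Finset.sum_const_zero]
    rw [if_neg (fun h => hij (h.1.symm.trans h.2)), mul_zero]

lemma single_mul_Pmat_pow (p : ZMod l) (m : ℕ) :
    single p p (1 : ℂ) * Pmat l ^ m = single p (p + m) 1 := by
  ext i j
  by_cases hi : i = p
  · subst hi
    rw [single_mul_apply_same, one_mul, ← zpow_natCast, Pmat_zpow_apply, single_apply]
    simp [eq_comm]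
  · rw [single_mul_apply_of_ne _ _ _ _ _ hi, single_apply, if_neg (fun h => hi h.1.symm)]

theorem span_amat_eq_top : Submodule.span ℂ {X : MatL l | ∃ r m : ℤ, X = amat l r m} = ⊤ := by
  set V := Submodule.span ℂ {X : MatL l | ∃ r m : ℤ, X = amat l r m}
  have hQP : ∀ r m : ℕ, Qmat l ^ r * Pmat l ^ m ∈ V := fun r m => by
    have h : Qmat l ^ r * Pmat l ^ m = (omegaL l ^ ((r : ℤ) * m))⁻¹ • amat l r m := by
      rw [amat, smul_smul, inv_mul_cancel₀ (zpow_ne_zero _ (omegaL_ne_zero l)), one_smul,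
        zpow_natCast, zpow_natCast]
    rw [h]
    exact V.smul_mem _ (Submodule.subset_span ⟨r, m, rfl⟩)
  have hsingle : ∀ p q : ZMod l, single p q 1 ∈ V := fun p q => by
    have hq : p + ((q - p).val : ZMod l) = q := by simp
    have h : single p q (1 : ℂ) = (l : ℂ)⁻¹ • ∑ r ∈ Finset.range l,
        ((zetaL l ^ (p.val + 1))⁻¹) ^ r • (Qmat l ^ r * Pmat l ^ (q - p).val) := by
      simp_rw [← Matrix.smul_mul, ← Finset.sum_mul, sum_range_smul_Qmat_pow, Matrix.smul_mul,
        single_mul_Pmat_pow, hq, smul_smul,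
        inv_mul_cancel₀ (Nat.cast_ne_zero.mpr (NeZero.ne l) : (l : ℂ) ≠ 0), one_smul]
    rw [h]
    exact V.smul_mem _ (V.sum_mem fun r _ => V.smul_mem _ (hQP r _))
  rw [eq_top_iff, ← (stdBasis ℂ (ZMod l) (ZMod l)).span_eq, Submodule.span_le]
  rintro _ ⟨⟨p, q⟩, rfl⟩
  rw [stdBasis_eq_single]
  exact hsingle p q

end Weyl

section T1

variable (l : ℕ) [NeZero l]

lemma val_neg_one_sub (i : ZMod l) : ((-1 - i).val : ℤ) = l - 1 - i.val := by
  have hi := ZMod.val_lt i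
  have h : (((l - 1 - i.val : ℕ)) : ZMod l) = -1 - i := by
    rw [Nat.cast_sub (by omega), Nat.cast_sub (by omega)]
    simp
  rw [← h, ZMod.val_cast_of_lt (by omega)]
  omega

lemma neg_one_pow_val_neg_one_sub (hl : Even l) (i : ZMod l) :
    (-1 : ℂ) ^ (-1 - i).val = (-1) ^ (i.val + 1) := by
  have h := val_neg_one_sub l i
  have hi := ZMod.val_lt i
  obtain ⟨k, hk⟩ := hl
  rw [neg_one_pow_eq_pow_mod_two, neg_one_pow_eq_pow_mod_two (n := i.val + 1)]
  congr 1
  omega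

lemma T1mat_apply (i j : ZMod l) :
    T1mat l i j = if j = -1 - i then (-1) ^ (i.val + 1) else 0 := by
  have hval := val_neg_one_sub l i
  have hi := ZMod.val_lt i
  have hj := ZMod.val_lt j
  have key : i.val + j.val + 1 = l ↔ j = -1 - i := by
    rw [← (ZMod.val_injective l).eq_iff]
    omega
  simp only [T1mat, of_apply, key]

lemma T1mat_mul_apply (M : MatL l) (i j : ZMod l) :
    (T1mat l * M) i j = (-1) ^ (i.val + 1) * M (-1 - i) j := by
  simp [mul_apply, T1mat_apply, ite_mul]

lemma mul_T1mat_apply (M : MatL l) (i j : ZMod l) :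
    (M * T1mat l) i j = M i (-1 - j) * (-1) ^ ((-1 - j).val + 1) := by
  have h : ∀ k : ZMod l, j = -1 - k ↔ k = -1 - j := fun k => by
    constructor <;> intro h <;> linear_combination h
  simp [mul_apply, T1mat_apply, h, mul_ite]

lemma T1mat_transpose (hl : Even l) : (T1mat l)ᵀ = -T1mat l := by
  ext i j
  rw [transpose_apply, neg_apply, T1mat_apply, T1mat_apply]
  by_cases h : j = -1 - i
  · subst h
    rw [if_pos (by ring), if_pos rfl, pow_succ, neg_one_pow_val_neg_one_sub l hl]
    ring
  · rw [if_neg (fun h' => h (by linear_combination h')), if_neg h, neg_zero]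

lemma T1mat_mul_self (hl : Even l) : T1mat l * T1mat l = -1 := by
  ext i j
  rw [T1mat_mul_apply, T1mat_apply, sub_sub_cancel, neg_apply, one_apply]
  by_cases h : j = i
  · rw [if_pos h, if_pos h.symm, pow_succ _ (ZMod.val (-1 - i)), neg_one_pow_val_neg_one_sub l hl,
      ← mul_assoc, ← pow_add, Even.neg_one_pow ⟨_, rfl⟩]
    ring
  · rw [if_neg h, if_neg (Ne.symm h), mul_zero, neg_zero]

lemma transposeConj_T1mat_amat (hl : Even l) (r m : ℤ) :
    transposeConj (T1mat l) (amat l r m) = (-((-1) ^ m * zetaL l ^ r)) • amat l (-r) m := by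
  ext i j
  rw [transposeConj_apply, mul_T1mat_apply, T1mat_mul_apply, transpose_apply, Matrix.smul_apply,
    amat_apply, amat_apply, smul_eq_mul]
  have hcond : -1 - i = -1 - j + m ↔ j = i + m := by
    constructor <;> intro h <;> linear_combination h
  by_cases h : j = i + m
  · rw [if_pos (hcond.mpr h), if_pos h]
    obtain ⟨t, ht⟩ : (l : ℤ) ∣ j.val - (i.val + m) := by
      rw [← ZMod.intCast_eq_intCast_iff_dvd_sub]
      push_cast
      simp [h]
    obtain ⟨k, hk⟩ := hl
    have hl' : (l : ℤ) = 2 * k := by omega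
    have hj := val_neg_one_sub l j
    rw [show -((-1 : ℂ) ^ m * zetaL l ^ r) = -1 * (-1) ^ m * zetaL l ^ r by ring,
      neg_one_eq_omegaL_zpow l, zetaL_eq_omegaL_sq]
    -- every factor is now a power of `ω`, a primitive `2l`-th root of unity
    simp only [← zpow_natCast, ← _root_.zpow_mul, ← zpow_add₀ (omegaL_ne_zero l)]
    apply omegaL_zpow_eq_of_dvd
    refine ⟨r - r * t + k - m - k * t, ?_⟩
    push_cast
    rw [hj, show (j.val : ℤ) = i.val + m + l * t by omega, hl']
    ring
  · rw [if_neg (fun h' => h (hcond.mp h')), if_neg h]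
    simp

lemma one_add_transposeConj_T1mat_amat (hl : Even l) (r m : ℤ) :
    (1 + transposeConj (T1mat l)) (amat l r m) = cmat l r m := by
  rw [LinearMap.add_apply, Module.End.one_apply, transposeConj_T1mat_amat l hl, cmat, neg_smul,
    sub_eq_add_neg]

theorem span_cmat_eq_ker (hl : Even l) :
    Submodule.span ℂ {X : MatL l | ∃ r m : ℤ, X = cmat l r m} =
      LinearMap.ker (skewPair (T1mat l)) := by
  have hc : {X : MatL l | ∃ r m : ℤ, X = cmat l r m} =
      ⇑(1 + transposeConj (T1mat l)) '' {X : MatL l | ∃ r m : ℤ, X = amat l r m} := by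
    ext X
    constructor
    · rintro ⟨r, m, rfl⟩
      exact ⟨amat l r m, ⟨r, m, rfl⟩, one_add_transposeConj_T1mat_amat l hl r m⟩
    · rintro ⟨_, ⟨r, m, rfl⟩, rfl⟩
      exact ⟨r, m, one_add_transposeConj_T1mat_amat l hl r m⟩
  rw [hc, span_image_one_add_eq_ker_sub_one
      (transposeConj_mul_self (T1mat_transpose l hl) (T1mat_mul_self l hl)) (span_amat_eq_top l),
    ker_skewPair_eq_ker_transposeConj_sub_one (T1mat_mul_self l hl)]

end T1

section SymplecticBasis

variable (l : ℕ)

/- For `b < l/2`, sends `b` and `b + l/2` to the antidiagonal partners `b` and `l - 1 - b`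
of `T₁`. -/
def symplecticPermFun (b : ZMod l) : ZMod l :=
  if b.val < l / 2 then b else ((l - 1 + l / 2 - b.val : ℕ) : ZMod l)

lemma val_symplecticPermFun [NeZero l] (b : ZMod l) :
    (symplecticPermFun l b).val = if b.val < l / 2 then b.val else l - 1 + l / 2 - b.val := by
  have hb := ZMod.val_lt b
  unfold symplecticPermFun
  split_ifs
  · rfl
  · exact ZMod.val_cast_of_lt (by omega)

def symplecticPerm [NeZero l] : Equiv.Perm (ZMod l) :=
  Function.Involutive.toPerm (symplecticPermFun l) fun b => by
    apply ZMod.val_injective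
    have hb := ZMod.val_lt b
    rw [val_symplecticPermFun, val_symplecticPermFun]
    split_ifs <;> omega

def symplecticSign (b : ZMod l) : ℂ :=
  if b.val < l / 2 then 1 else (-1) ^ (b.val - l / 2 + 1)

def symplecticBasisChange [NeZero l] : MatL l :=
  (symplecticPerm l).permMatrix ℂ * diagonal (symplecticSign l)

variable [NeZero l]

lemma isUnit_symplecticBasisChange : IsUnit (symplecticBasisChange l) := by
  rw [symplecticBasisChange, isUnit_iff_isUnit_det, det_mul, det_permutation, det_diagonal,
    isUnit_iff_ne_zero]
  refine mul_ne_zero (by simp) (Finset.prod_ne_zero_iff.mpr fun b _ => ?_)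
  unfold symplecticSign
  split_ifs <;> simp

lemma transpose_symplecticBasisChange_mul_T1mat_mul (hl : Even l) :
    (symplecticBasisChange l)ᵀ * T1mat l * symplecticBasisChange l = Jmat l := by
  have he : l % 2 = 0 := Nat.even_iff.mp hl
  rw [symplecticBasisChange, transpose_permMatrix_mul_diagonal_mul]
  ext a b
  have ha := ZMod.val_lt a
  have hb := ZMod.val_lt b
  have hσ : ∀ c, (symplecticPerm l).symm c = symplecticPermFun l c := fun _ => rfl
  rw [of_apply, hσ, hσ, T1mat, of_apply, Jmat, of_apply, symplecticSign, symplecticSign,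
    val_symplecticPermFun, val_symplecticPermFun]
  by_cases hA : a.val < l / 2 <;> by_cases hB : b.val < l / 2 <;>
    simp only [hA, hB, if_true, if_false] <;> split_ifs <;>
    simp only [one_mul, mul_one, mul_zero, zero_mul, ← pow_add] <;>
    first
    | (exfalso; omega)
    | rfl
    | exact Even.neg_one_pow (Nat.even_iff.mpr (by omega))
    | exact Odd.neg_one_pow (Nat.odd_iff.mpr (by omega))

end SymplecticBasis

theorem stmt18_general (l : ℕ) [NeZero l] (hl : Even l) :
    -- the span of the `c_{r,m}` is exactly `{X : Xᵀ T₁ = −T₁ X}`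
    Submodule.span ℂ {X : MatL l | ∃ r m : ℤ, X = cmat l r m} =
      LinearMap.ker (skewPair (T1mat l)) ∧
    -- this space is a Lie subalgebra of `gl_l(ℂ)` ...
    (∀ X Y : MatL l, X ∈ LinearMap.ker (skewPair (T1mat l)) →
      Y ∈ LinearMap.ker (skewPair (T1mat l)) →
      X * Y - Y * X ∈ LinearMap.ker (skewPair (T1mat l))) ∧
    -- ... of dimension l(l+1)/2 ...
    Module.finrank ℂ (LinearMap.ker (skewPair (T1mat l))) = l * (l + 1) / 2 ∧
    -- ... isomorphic as a complex Lie algebra to `sp(l,ℂ) = {X : Xᵀ J = −J X}`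
    ∃ e : LinearMap.ker (skewPair (T1mat l)) ≃ₗ[ℂ] LinearMap.ker (skewPair (Jmat l)),
      ∀ X Y : LinearMap.ker (skewPair (T1mat l)),
        ∃ Z : LinearMap.ker (skewPair (T1mat l)),
          (Z : MatL l) = (X : MatL l) * Y - (Y : MatL l) * X ∧
          (e Z : MatL l) = (e X : MatL l) * (e Y) - (e Y : MatL l) * (e X) := by
  have hT2 := T1mat_mul_self l hl
  let _ : Invertible (T1mat l) :=
    ⟨-T1mat l, by rw [neg_mul, hT2, neg_neg], by rw [mul_neg, hT2, neg_neg]⟩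
  let _ := (isUnit_symplecticBasisChange l).invertible
  refine ⟨span_cmat_eq_ker l hl, fun _ _ => commutator_mem_ker_skewPair, ?_, ?_⟩
  · rw [finrank_ker_skewPair (T1mat_transpose l hl), ZMod.card]
  · rw [← transpose_symplecticBasisChange_mul_T1mat_mul l hl]
    exact exists_ker_skewPair_linearEquiv_map_commutator _ _

theorem stmt18 (l : ℕ) [NeZero l] (hl : Even l) (hl2 : 2 ≤ l) :
    -- the span of the `c_{r,m}` is exactly `{X : Xᵀ T₁ = −T₁ X}`
    Submodule.span ℂ {X : MatL l | ∃ r m : ℤ, X = cmat l r m} =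
      LinearMap.ker (skewPair (T1mat l)) ∧
    -- this space is a Lie subalgebra of `gl_l(ℂ)` ...
    (∀ X Y : MatL l, X ∈ LinearMap.ker (skewPair (T1mat l)) →
      Y ∈ LinearMap.ker (skewPair (T1mat l)) →
      X * Y - Y * X ∈ LinearMap.ker (skewPair (T1mat l))) ∧
    -- ... of dimension l(l+1)/2 ...
    Module.finrank ℂ (LinearMap.ker (skewPair (T1mat l))) = l * (l + 1) / 2 ∧
    -- ... isomorphic as a complex Lie algebra to `sp(l,ℂ) = {X : Xᵀ J = −J X}`
    ∃ e : LinearMap.ker (skewPair (T1mat l)) ≃ₗ[ℂ] LinearMap.ker (skewPair (Jmat l)),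
      ∀ X Y : LinearMap.ker (skewPair (T1mat l)),
        ∃ Z : LinearMap.ker (skewPair (T1mat l)),
          (Z : MatL l) = (X : MatL l) * Y - (Y : MatL l) * X ∧
          (e Z : MatL l) = (e X : MatL l) * (e Y) - (e Y : MatL l) * (e X) :=
  stmt18_general l hl
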